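/- arXiv:1009.5852 — 6 statements merged into one kernel-verified Lean document; each statement's English description precedes it below -/
import Mathlib

section
/- In the free unital algebra F⟨a,b,c⟩ on letters a, b, c with the derivation ∂ determined by ∂(a)=∂(c)=∂(e)=0, ∂(b)=c−a (extended as a degree-1 derivation with Koszul signs, where deg of a word is minus the number of b's), define the shifted product x ∘ y = x ⋄ c ⋄ y and the operators d_i inserting the letter a at position i. Setting L_1 = e and L_n = b^{⋄(n−1)} for n ≥ 2, one has for every k ≥ 2: ∂(L_k) = Σ_{j=1}^{k−1} (−1)^{j+1} L_j ∘ L_{k−j} + Σ_{j=1}^{k−1} (−1)^j d_j(L_{k−1}). -/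
/-
STATEMENT 2: In the free unital algebra on {a,b,c} (words, 0 = a, 1 = b, 2 = c) with the
degree-1 derivation ∂ determined by ∂a = ∂c = 0, ∂b = c - a (Koszul signs w.r.t.
concatenation ⋄, degree of a word = -(# of b's)), with the shifted product
x ∘ y = x ⋄ c ⋄ y, the insertion operators d_i (inserting the letter a at position i)
and L_1 = e, L_n = b^{⋄(n-1)}, one has for all k ≥ 2:
  ∂(L_k) = Σ_{j=1}^{k-1} (-1)^{j+1} L_j ∘ L_{k-j} + Σ_{j=1}^{k-1} (-1)^j d_j (L_{k-1}).
-/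

noncomputable section

abbrev Word := FreeMonoid (Fin 3)
abbrev Om : Type := MonoidAlgebra ℝ Word

def W (w : Word) : Om := MonoidAlgebra.single w 1

def aW : Word := FreeMonoid.of 0
def bW : Word := FreeMonoid.of 1
def cW : Word := FreeMonoid.of 2

def bcount (w : Word) : ℕ := (FreeMonoid.toList w).count 1

/-- the operator `d_i`: insertion of the letter `a` at position `i` (1-indexed). -/
def dIns (i : ℕ) : Om →ₗ[ℝ] Om :=
  MonoidAlgebra.mapDomainLinearMap ℝ ℝ
    (fun w : Word => FreeMonoid.ofList ((FreeMonoid.toList w).insertIdx (i - 1) (0 : Fin 3)))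

/-- `L 1 = e` (the empty word) and `L n = b^{⋄(n-1)}` for `n ≥ 2`. -/
def L (n : ℕ) : Om := W (FreeMonoid.ofList (List.replicate (n - 1) (1 : Fin 3)))

/-
Only the letter `b` occurs in `L k = b^(k-1)`, so the twisted Leibniz rule expands
`∂(b^(k-1))` as `Σ_i (-1)^i b^i (c - a) b^(k-2-i)`, the sign counting the `b`'s passed.
The `c`-part of the `i`-th term is `L_{i+1} ∘ L_{k-1-i}` and the `a`-part is `d_{i+1}(L_{k-1})`.
-/

def bPow (n : ℕ) : Om := W (FreeMonoid.ofList (List.replicate n (1 : Fin 3)))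

lemma L_succ (n : ℕ) : L (n + 1) = bPow n := rfl

lemma W_mul_W (w w' : Word) : W w * W w' = W (w * w') := by
  simp [W, MonoidAlgebra.single_mul_single]

lemma bPow_succ (n : ℕ) : bPow (n + 1) = W bW * bPow n := by
  rw [bPow, bPow, W_mul_W]
  rfl

lemma List.insertIdx_replicate_append {α : Type*} (x y : α) (i m : ℕ) :
    (List.replicate (i + m) y).insertIdx i x = List.replicate i y ++ x :: List.replicate m y := by
  induction i with
  | zero => simp
  | succ i ih => simp [Nat.succ_add, List.replicate_succ, List.insertIdx_succ_cons, ih]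

lemma dIns_succ_bPow (i m : ℕ) : dIns (i + 1) (bPow (i + m)) = bPow i * W aW * bPow m := by
  rw [dIns, bPow, W, MonoidAlgebra.mapDomainLinearMap_single, Nat.add_sub_cancel,
    FreeMonoid.toList_ofList, List.insertIdx_replicate_append, FreeMonoid.ofList_append,
    FreeMonoid.ofList_cons, ← mul_assoc, bPow, bPow, W_mul_W, W_mul_W, W]
  rfl

section Derivation

variable (D : Om →ₗ[ℝ] Om) (hb : D (W bW) = W cW - W aW)
  (hleib : ∀ w w' : Word,
    D (W (w * w')) = D (W w) * W w' + ((-1 : ℝ) ^ (bcount w)) • (W w * D (W w')))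
include hb hleib

lemma derivation_bPow_succ (n : ℕ) :
    D (bPow (n + 1)) = ∑ i ∈ Finset.range (n + 1),
      ((-1 : ℝ) ^ i) • (bPow i * (W cW - W aW) * bPow (n - i)) := by
  have hbPow_zero : bPow 0 = 1 := rfl
  induction n with
  | zero => simp [show bPow 1 = W bW from rfl, hb, hbPow_zero]
  | succ n ih =>
    have hsplit : bPow (n + 2) = W (bW * FreeMonoid.ofList (List.replicate (n + 1) 1)) := by
      rw [bPow_succ, bPow, W_mul_W]
    have hbcount : bcount bW = 1 := rfl
    rw [hsplit, hleib, hbcount, ← bPow, hb, ih, Finset.sum_range_succ' _ (n + 1), Finset.mul_sum,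
      Finset.smul_sum, add_comm]
    congr 1
    · refine Finset.sum_congr rfl fun i _ => ?_
      rw [bPow_succ, Nat.add_sub_add_right, mul_smul_comm, smul_smul, ← pow_add, add_comm 1 i]
      simp only [mul_assoc]
    · simp [hbPow_zero]

end Derivation

theorem stmt2_general (D : Om →ₗ[ℝ] Om)
    (hb : D (W bW) = W cW - W aW)
    (hleib : ∀ w w' : Word,
      D (W (w * w')) = D (W w) * W w' + ((-1 : ℝ) ^ (bcount w)) • (W w * D (W w'))) :
    ∀ k : ℕ, 2 ≤ k →
      D (L k) = (∑ j ∈ Finset.Ico 1 k, ((-1 : ℝ) ^ (j + 1)) • (L j * W cW * L (k - j)))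
        + ∑ j ∈ Finset.Ico 1 k, ((-1 : ℝ) ^ j) • dIns j (L (k - 1)) := by
  intro k hk
  obtain ⟨n, rfl⟩ := Nat.exists_eq_add_of_le' hk
  rw [L_succ, derivation_bPow_succ D hb hleib, Finset.sum_Ico_eq_sum_range,
    Finset.sum_Ico_eq_sum_range, ← Finset.sum_add_distrib, show n + 2 - 1 = n + 1 by omega]
  refine Finset.sum_congr rfl fun i hi => ?_
  obtain ⟨m, rfl⟩ := Nat.exists_eq_add_of_le (Nat.lt_succ_iff.mp (Finset.mem_range.mp hi))
  rw [show i + m + 2 - (1 + i) = m + 1 by omega, add_comm 1 i, L_succ, L_succ, L_succ,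
    dIns_succ_bPow, Nat.add_sub_cancel_left, mul_sub, sub_mul]
  module

theorem stmt2 (D : Om →ₗ[ℝ] Om)
    (ha : D (W aW) = 0) (hc : D (W cW) = 0) (hb : D (W bW) = W cW - W aW)
    (hleib : ∀ w w' : Word,
      D (W (w * w')) = D (W w) * W w' + ((-1 : ℝ) ^ (bcount w)) • (W w * D (W w'))) :
    ∀ k : ℕ, 2 ≤ k →
      D (L k) = (∑ j ∈ Finset.Ico 1 k, ((-1 : ℝ) ^ (j + 1)) • (L j * W cW * L (k - j)))
        + ∑ j ∈ Finset.Ico 1 k, ((-1 : ℝ) ^ j) • dIns j (L (k - 1)) :=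
  stmt2_general D hb hleib

end
end

section
/- Let (A, d, F_•) be a complete differential graded algebra (A is the inverse limit of A/F_p A, each F_p A is a subcomplex, and F_p A · F_q A ⊆ F_{p+q} A). Let r ≥ 1 and let γ ∈ A^1 satisfy dγ + γ² ≡ 0 mod F_r A. Assume H²(F_p A / F_{p+1} A, d_γ) = 0 for all p ≥ r, where d_γ(x) = d(x) + γx − (−1)^{|x|} xγ. Then there exists a Maurer-Cartan element ω ∈ A^1 (i.e. dω + ω² = 0) with ω ≡ γ mod F_r A. -/
theorem exists_seq_aux {α : Type*} (Inv : ℕ → α → Prop) (R : ℕ → α → α → Prop)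
    (a0 : α) (h0 : Inv 0 a0)
    (hstep : ∀ p a, Inv p a → ∃ b, Inv (p+1) b ∧ R p a b) :
    ∃ g : ℕ → α, g 0 = a0 ∧ (∀ p, Inv p (g p)) ∧ ∀ p, R p (g p) (g (p+1)) := by
  choose next h1 h2 using hstep
  let g' : ∀ p : ℕ, {a : α // Inv p a} := fun p =>
    Nat.rec ⟨a0, h0⟩ (fun p ih => ⟨next p ih.1 ih.2, h1 p ih.1 ih.2⟩) p
  exact ⟨fun p => (g' p).1, rfl, fun p => (g' p).2, fun p => h2 p (g' p).1 (g' p).2⟩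

theorem stmt4 {A : Type} [Ring A] [Algebra ℝ A]
    (deg : ℤ → Submodule ℝ A)
    (one_mem : (1 : A) ∈ deg 0)
    (mul_mem : ∀ {m n : ℤ} {a b : A}, a ∈ deg m → b ∈ deg n → a * b ∈ deg (m + n))
    (d : A →ₗ[ℝ] A)
    (d_deg : ∀ {n : ℤ} {a : A}, a ∈ deg n → d a ∈ deg (n + 1))
    (d_sq : ∀ a : A, d (d a) = 0)
    (d_leib : ∀ {n : ℤ} {a b : A}, a ∈ deg n →
      d (a * b) = d a * b + ((-1 : ℝ) ^ n) • (a * d b))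
    (F : ℕ → Submodule ℝ A)
    (F_zero : F 0 = ⊤)
    (F_mono : ∀ p, F (p + 1) ≤ F p)
    (F_mul : ∀ p q : ℕ, ∀ a b : A, a ∈ F p → b ∈ F q → a * b ∈ F (p + q))
    (F_d : ∀ p : ℕ, ∀ a ∈ F p, d a ∈ F p)
    (separated : ∀ a : A, (∀ p, a ∈ F p) → a = 0)
    (complete : ∀ x : ℕ → A, (∀ p, x (p + 1) - x p ∈ F p) → ∃ a : A, ∀ p, a - x p ∈ F p)
    (deg_closed : ∀ (n : ℤ) (a : A), (∀ p, ∃ b ∈ deg n, a - b ∈ F p) → a ∈ deg n)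
    (r : ℕ) (hr : 1 ≤ r)
    (γ : A) (hγdeg : γ ∈ deg 1) (hγ : d γ + γ * γ ∈ F r)
    -- H²(F_p/F_{p+1}, d_γ) = 0 for all p ≥ r:
    (H2 : ∀ p : ℕ, r ≤ p → ∀ x : A, x ∈ F p → x ∈ deg 2 →
      d x + γ * x - x * γ ∈ F (p + 1) →
      ∃ y : A, y ∈ F p ∧ y ∈ deg 1 ∧ x - (d y + γ * y + y * γ) ∈ F (p + 1)) :
    ∃ ω : A, ω ∈ deg 1 ∧ d ω + ω * ω = 0 ∧ ω - γ ∈ F r := by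
  have F_le : ∀ {m n : ℕ}, m ≤ n → F n ≤ F m := by
    intro m n h
    induction h with
    | refl => exact le_rfl
    | step _ ih => exact le_trans (F_mono _) ih
  have leib1 : ∀ (a b : A), a ∈ deg 1 → d (a * b) = d a * b - a * d b := by
    intro a b ha
    rw [d_leib ha]
    simp [sub_eq_add_neg]
  -- the inductive step
  have step : ∀ p (a : A),
      (a ∈ deg 1 ∧ a - γ ∈ F r ∧ d a + a * a ∈ F (max p r)) →
      ∃ b : A, (b ∈ deg 1 ∧ b - γ ∈ F r ∧ d b + b * b ∈ F (max (p+1) r)) ∧ b - a ∈ F p := by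
    intro p a ⟨ha1, har, haO⟩
    rcases le_or_gt r p with hrp | hrp
    · have hmax : max p r = p := Nat.max_eq_left hrp
      have hO : d a + a * a ∈ F p := hmax ▸ haO
      have hOdeg : d a + a * a ∈ deg 2 := by
        have h1 := d_deg ha1
        have h2 := mul_mem ha1 ha1
        norm_num at h1 h2
        exact Submodule.add_mem _ h1 h2
      have hγa : γ - a ∈ F r := by
        have := Submodule.neg_mem _ har
        rwa [neg_sub] at this
      have key : d (d a + a * a) + γ * (d a + a * a) - (d a + a * a) * γ ∈ F (p+1) := by
        have heq : d (d a + a * a) + γ * (d a + a * a) - (d a + a * a) * γ =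
            (γ - a) * (d a + a * a) - (d a + a * a) * (γ - a) := by
          rw [map_add, d_sq, leib1 a a ha1]
          noncomm_ring
        rw [heq]
        exact Submodule.sub_mem _
          (F_le (by omega) (F_mul r p _ _ hγa hO))
          (F_le (by omega) (F_mul p r _ _ hO hγa))
      obtain ⟨y, hyF, hydeg, hy⟩ := H2 p hrp _ hO hOdeg key
      refine ⟨a - y, ⟨sub_mem ha1 hydeg, ?_, ?_⟩, ?_⟩
      · rw [sub_right_comm]
        exact sub_mem har (F_le hrp hyF)
      · have hmax2 : max (p+1) r = p + 1 := Nat.max_eq_left (by omega)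
        rw [hmax2]
        have hid : d (a - y) + (a - y) * (a - y) =
            ((d a + a * a) - (d y + γ * y + y * γ)) - ((a - γ) * y + y * (a - γ)) + y * y := by
          rw [map_sub]
          noncomm_ring
        rw [hid]
        refine Submodule.add_mem _ (Submodule.sub_mem _ hy (Submodule.add_mem _ ?_ ?_)) ?_
        · exact F_le (by omega) (F_mul r p _ _ har hyF)
        · exact F_le (by omega) (F_mul p r _ _ hyF har)
        · exact F_le (by omega) (F_mul p p _ _ hyF hyF)
      · simpa using Submodule.neg_mem _ hyF
    · have hmax : max p r = r := Nat.max_eq_right (by omega)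
      have hmax2 : max (p+1) r = r := Nat.max_eq_right (by omega)
      exact ⟨a, ⟨ha1, har, by rw [hmax2]; exact hmax ▸ haO⟩, by simp⟩
  obtain ⟨g, hg0, hgInv, hgR⟩ := exists_seq_aux
    (fun p a => a ∈ deg 1 ∧ a - γ ∈ F r ∧ d a + a * a ∈ F (max p r))
    (fun p a b => b - a ∈ F p) γ
    ⟨hγdeg, by simp, by rw [Nat.max_eq_right (Nat.zero_le r)]; exact hγ⟩ step
  obtain ⟨ω, hω⟩ := complete g hgR
  refine ⟨ω, deg_closed 1 ω (fun p => ⟨g p, (hgInv p).1, hω p⟩), ?_, ?_⟩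
  · apply separated
    intro p
    set q := p + r with hq
    have hrq : r ≤ q := by omega
    have hmaxq : max q r = q := Nat.max_eq_left hrq
    have h1 : d (ω - g q) ∈ F q := F_d q _ (hω q)
    have h2 : ω * (ω - g q) ∈ F q := by
      have := F_mul 0 q ω _ (by rw [F_zero]; trivial) (hω q)
      simpa using this
    have h3 : (ω - g q) * g q ∈ F q := by
      have := F_mul q 0 _ (g q) (hω q) (by rw [F_zero]; trivial)
      simpa using this
    have h4 : d (g q) + g q * g q ∈ F q := by simpa [hmaxq] using (hgInv q).2.2
    have hid : d ω + ω * ω =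
        d (ω - g q) + (ω * (ω - g q) + (ω - g q) * g q) + (d (g q) + g q * g q) := by
      rw [map_sub]
      noncomm_ring
    rw [hid]
    exact F_le (by omega)
      (Submodule.add_mem _ (Submodule.add_mem _ h1 (Submodule.add_mem _ h2 h3)) h4)
  · have hid : ω - γ = (ω - g r) + (g r - γ) := by abel
    rw [hid]
    exact Submodule.add_mem _ (hω r) (hgInv r).2.1
end

section
/- Let (A, d, F_•) be a complete differential graded algebra, and let ω, θ be Maurer-Cartan elements of A with ω ≡ θ mod F_r A for some r ≥ 1. If H¹(F_p A / F_{p+1} A, d_ω) = 0 for all p ≥ r, then ω and θ are strongly gauge equivalent: there exists u ∈ A^0 with u ≡ 1 mod F_1 A (hence invertible) such that u ω u^{−1} − θ = (du) u^{−1}. -/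
/-
STATEMENT 5: Let (A, d, F_•) be a complete DGA and ω, θ Maurer-Cartan elements with
ω ≡ θ mod F_r (r ≥ 1).  If H¹(F_p/F_{p+1}, d_ω) = 0 for all p ≥ r, then ω and θ are
strongly gauge equivalent: there is a (degree 0, invertible) u with u ≡ 1 mod F_1 and
u ω u⁻¹ − θ = (du) u⁻¹, i.e. u ω v − θ = (du) v for the two-sided inverse v of u.
-/

/-- Auxiliary invariant for the inductive construction in `stmt5`. -/
abbrev Inv5 {A : Type} [Ring A] [Algebra ℝ A] (deg : ℤ → Submodule ℝ A)
    (F : ℕ → Submodule ℝ A) (d : A →ₗ[ℝ] A) (ω θ : A) (p : ℕ) (uv : A × A) : Prop :=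
  uv.1 ∈ deg 0 ∧ uv.2 ∈ deg 0 ∧ uv.1 - 1 ∈ F 1 ∧ uv.1 * uv.2 = 1 ∧ uv.2 * uv.1 = 1 ∧
    uv.1 * ω * uv.2 - d uv.1 * uv.2 - θ ∈ F p

theorem stmt5 {A : Type} [Ring A] [Algebra ℝ A]
    (deg : ℤ → Submodule ℝ A)
    (one_mem : (1 : A) ∈ deg 0)
    (mul_mem : ∀ {m n : ℤ} {a b : A}, a ∈ deg m → b ∈ deg n → a * b ∈ deg (m + n))
    (d : A →ₗ[ℝ] A)
    (d_deg : ∀ {n : ℤ} {a : A}, a ∈ deg n → d a ∈ deg (n + 1))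
    (d_sq : ∀ a : A, d (d a) = 0)
    (d_leib : ∀ {n : ℤ} {a b : A}, a ∈ deg n →
      d (a * b) = d a * b + ((-1 : ℝ) ^ n) • (a * d b))
    (F : ℕ → Submodule ℝ A)
    (F_zero : F 0 = ⊤)
    (F_mono : ∀ p, F (p + 1) ≤ F p)
    (F_mul : ∀ p q : ℕ, ∀ a b : A, a ∈ F p → b ∈ F q → a * b ∈ F (p + q))
    (F_d : ∀ p : ℕ, ∀ a ∈ F p, d a ∈ F p)
    (separated : ∀ a : A, (∀ p, a ∈ F p) → a = 0)
    (complete : ∀ x : ℕ → A, (∀ p, x (p + 1) - x p ∈ F p) → ∃ a : A, ∀ p, a - x p ∈ F p)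
    (deg_closed : ∀ (n : ℤ) (a : A), (∀ p, ∃ b ∈ deg n, a - b ∈ F p) → a ∈ deg n)
    (r : ℕ) (hr : 1 ≤ r)
    (ω θ : A) (hωdeg : ω ∈ deg 1) (hθdeg : θ ∈ deg 1)
    (hωMC : d ω + ω * ω = 0) (hθMC : d θ + θ * θ = 0)
    (hcong : ω - θ ∈ F r)
    -- H¹(F_p/F_{p+1}, d_ω) = 0 for all p ≥ r:
    (H1 : ∀ p : ℕ, r ≤ p → ∀ x : A, x ∈ F p → x ∈ deg 1 →
      d x + ω * x + x * ω ∈ F (p + 1) →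
      ∃ y : A, y ∈ F p ∧ y ∈ deg 0 ∧ x - (d y + ω * y - y * ω) ∈ F (p + 1)) :
    ∃ u v : A, u ∈ deg 0 ∧ u - 1 ∈ F 1 ∧ u * v = 1 ∧ v * u = 1 ∧
      u * ω * v - θ = d u * v := by
  have Ftop : ∀ a : A, a ∈ F 0 := by intro a; rw [F_zero]; trivial
  have FmonoLe : ∀ {p q : ℕ}, p ≤ q → F q ≤ F p := by
    intro p q h
    induction h with
    | refl => exact le_rfl
    | step h ih => exact le_trans (F_mono _) ih
  have Fmul' : ∀ {s p q : ℕ} {a b : A}, p + q = s → a ∈ F p → b ∈ F q → a * b ∈ F s := by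
    intro s p q a b h ha hb; exact h ▸ F_mul p q a b ha hb
  have mulF : ∀ {p : ℕ} (a : A) {b : A}, b ∈ F p → a * b ∈ F p := by
    intro p a b hb; exact Fmul' (Nat.zero_add p) (Ftop a) hb
  have Fmul'' : ∀ {p : ℕ} {a : A} (b : A), a ∈ F p → a * b ∈ F p := by
    intro p a b ha; exact Fmul' (Nat.add_zero p) ha (Ftop b)
  have d1 : d (1 : A) = 0 := by
    have h := d_leib (n := 0) (b := (1 : A)) one_mem
    simpa using h
  have leib0 : ∀ {a b : A}, a ∈ deg 0 → d (a * b) = d a * b + a * d b := by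
    intro a b ha
    have h := d_leib (n := 0) (b := b) ha
    simpa using h
  have leib1 : ∀ {a b : A}, a ∈ deg 1 → d (a * b) = d a * b - a * d b := by
    intro a b ha
    have h := d_leib (n := 1) (b := b) ha
    rw [h]; simp [sub_eq_add_neg]
  -- inverse lemma
  have invLemma : ∀ u : A, u - 1 ∈ F 1 → u ∈ deg 0 →
      ∃ v : A, u * v = 1 ∧ v * u = 1 ∧ v ∈ deg 0 := by
    intro u hu1 hu0
    set x : A := 1 - u with hx
    have hxF : x ∈ F 1 := by
      have := Submodule.neg_mem _ hu1; simpa [hx] using this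
    have hx0 : x ∈ deg 0 := Submodule.sub_mem _ one_mem hu0
    have hxpowF : ∀ k : ℕ, x ^ k ∈ F k := by
      intro k
      induction k with
      | zero => simpa using Ftop 1
      | succ k ih => rw [pow_succ]; exact Fmul' rfl ih hxF
    have hxpow0 : ∀ k : ℕ, x ^ k ∈ deg 0 := by
      intro k
      induction k with
      | zero => simpa using one_mem
      | succ k ih =>
        rw [pow_succ]
        have := mul_mem ih hx0; simpa using this
    set s : ℕ → A := fun N => ∑ k ∈ Finset.range N, x ^ k with hs
    have hsdiff : ∀ N, s (N + 1) - s N ∈ F N := by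
      intro N
      have : s (N + 1) - s N = x ^ N := by
        simp [hs, Finset.sum_range_succ]
      rw [this]; exact hxpowF N
    obtain ⟨v, hv⟩ := complete s hsdiff
    have hxs : ∀ N, x * s N = s (N + 1) - 1 := by
      intro N
      simp only [hs, Finset.mul_sum, ← pow_succ']
      rw [Finset.sum_range_succ' (fun k => x ^ k)]
      simp
    have hsx : ∀ N, s N * x = s (N + 1) - 1 := by
      intro N
      simp only [hs, Finset.sum_mul, ← pow_succ]
      rw [Finset.sum_range_succ' (fun k => x ^ k)]
      simp
    have huv : u * v = 1 := by
      apply sub_eq_zero.mp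
      apply separated
      intro p
      have h1 : u * v - 1 = u * (v - s p) - x ^ p := by
        have husp : u * s p = s p - (x * s p) := by
          rw [hx]; noncomm_ring
        rw [hxs p] at husp
        have hd : s (p+1) - s p = x ^ p := by simp [hs, Finset.sum_range_succ]
        calc u * v - 1 = u * (v - s p) + (u * s p - 1) := by noncomm_ring
          _ = u * (v - s p) - x ^ p := by rw [husp, ← hd]; noncomm_ring
      rw [h1]
      exact Submodule.sub_mem _ (mulF u (hv p)) (hxpowF p)
    have hvu : v * u = 1 := by
      apply sub_eq_zero.mp
      apply separated
      intro p
      have h1 : v * u - 1 = (v - s p) * u - x ^ p := by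
        have hspu : s p * u = s p - (s p * x) := by
          rw [hx]; noncomm_ring
        rw [hsx p] at hspu
        have hd : s (p+1) - s p = x ^ p := by simp [hs, Finset.sum_range_succ]
        calc v * u - 1 = (v - s p) * u + (s p * u - 1) := by noncomm_ring
          _ = (v - s p) * u - x ^ p := by rw [hspu, ← hd]; noncomm_ring
      rw [h1]
      exact Submodule.sub_mem _ (Fmul'' u (hv p)) (hxpowF p)
    refine ⟨v, huv, hvu, ?_⟩
    apply deg_closed
    intro p
    refine ⟨s p, ?_, hv p⟩
    exact Submodule.sum_mem _ (fun k _ => hxpow0 k)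
  -- differential of inverse
  have dinv : ∀ {u v : A}, u ∈ deg 0 → u * v = 1 → v * u = 1 →
      d v = -(v * (d u * v)) := by
    intro u v hu0 huv hvu
    have h : d u * v + u * d v = 0 := by
      rw [← leib0 hu0, huv, d1]
    have h2 : u * d v = -(d u * v) := eq_neg_of_add_eq_zero_right h
    calc d v = v * (u * d v) := by rw [← mul_assoc, hvu, one_mul]
      _ = -(v * (d u * v)) := by rw [h2, mul_neg]
  -- MC for gauge transform
  have hgaugeMC : ∀ {u v : A}, u ∈ deg 0 → v ∈ deg 0 → u * v = 1 → v * u = 1 →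
      d (u * ω * v - d u * v) + (u * ω * v - d u * v) * (u * ω * v - d u * v) = 0 := by
    intro u v hu0 hv0 huv hvu
    have hdv : d v = -(v * (d u * v)) := dinv hu0 huv hvu
    have hdu1 : d u ∈ deg 1 := by have := d_deg hu0; rwa [zero_add] at this
    have hduv : d (d u * v) = - (d u * d v) := by
      rw [leib1 hdu1, d_sq]; simp
    have hωv : d (ω * v) = d ω * v - ω * d v := leib1 hωdeg
    have hdω : d ω = -(ω * ω) := eq_neg_of_add_eq_zero_left hωMC
    have hvu' : ∀ a : A, v * (u * a) = a := fun a => by rw [← mul_assoc, hvu, one_mul]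
    have huv' : ∀ a : A, u * (v * a) = a := fun a => by rw [← mul_assoc, huv, one_mul]
    have expand : d (u * ω * v - d u * v)
        = d u * (ω * v) + u * (d ω * v - ω * d v) + d u * d v := by
      rw [map_sub, mul_assoc, leib0 hu0, hωv, hduv]
      noncomm_ring
    rw [expand, hdv, hdω]
    simp only [mul_assoc, sub_mul, mul_sub, mul_neg, neg_mul]
    simp only [hvu', huv']
    noncomm_ring
  -- the inductive step
  have key : ∀ (p : ℕ) (uv : A × A), ∃ uv' : A × A, r ≤ p → Inv5 deg F d ω θ p uv →
      Inv5 deg F d ω θ (p + 1) uv' ∧ uv'.1 - uv.1 ∈ F p := by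
    intro p uv
    by_cases h : r ≤ p ∧ Inv5 deg F d ω θ p uv
    · obtain ⟨hrp, hu0, hv0, hu1, huv, hvu, hθp⟩ := h
      obtain ⟨u, v⟩ := uv
      simp only at hu0 hv0 hu1 huv hvu hθp ⊢
      have hp1 : 1 ≤ p := le_trans hr hrp
      set ω' : A := u * ω * v - d u * v with hω'def
      set x : A := ω' - θ with hxdef
      have hxF : x ∈ F p := hθp
      have hdu1 : d u ∈ deg 1 := by have := d_deg hu0; rwa [zero_add] at this
      have hω'1 : ω' ∈ deg 1 := by
        have h1 : u * ω ∈ deg 1 := by simpa using mul_mem hu0 hωdeg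
        have h2 : u * ω * v ∈ deg 1 := by simpa using mul_mem h1 hv0
        have h3 : d u * v ∈ deg 1 := by simpa using mul_mem hdu1 hv0
        exact Submodule.sub_mem _ h2 h3
      have hx1 : x ∈ deg 1 := Submodule.sub_mem _ hω'1 hθdeg
      have hMC' : d ω' + ω' * ω' = 0 := hgaugeMC hu0 hv0 huv hvu
      have hω'ω : ω' - ω ∈ F r := by
        have h1 : x ∈ F r := FmonoLe hrp hxF
        have h2 : ω' - ω = x - (ω - θ) := by rw [hxdef]; noncomm_ring
        rw [h2]; exact Submodule.sub_mem _ h1 hcong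
      have hH1hyp : d x + ω * x + x * ω ∈ F (p + 1) := by
        have he : d x + ω * x + x * ω = (ω - θ) * x + x * (ω - θ) - x * x := by
          have h1 : d x = d ω' - d θ := by rw [hxdef, map_sub]
          rw [h1, eq_neg_of_add_eq_zero_left hMC', eq_neg_of_add_eq_zero_left hθMC,
            show ω' = θ + x by rw [hxdef]; noncomm_ring]
          noncomm_ring
        rw [he]
        refine Submodule.sub_mem _ (Submodule.add_mem _ ?_ ?_) ?_
        · exact FmonoLe (by omega) (Fmul' rfl hcong hxF)
        · exact FmonoLe (by omega) (Fmul' rfl hxF hcong)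
        · exact FmonoLe (by omega) (Fmul' rfl hxF hxF)
      obtain ⟨y, hyF, hy0, hykey⟩ := H1 p hrp x hxF hx1 hH1hyp
      have hy1F : y ∈ F 1 := FmonoLe hp1 hyF
      have h1y0 : (1 : A) + y ∈ deg 0 := Submodule.add_mem _ one_mem hy0
      have h1y1 : (1 : A) + y - 1 ∈ F 1 := by simpa using hy1F
      obtain ⟨w, h1w, hw1, hw0⟩ := invLemma (1 + y) h1y1 h1y0
      set e : A := w - (1 - y) with hedef
      have h1mw : (1 : A) - w ∈ F p := by
        have h1 : (1 : A) - w = w * y := by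
          have h2 : w * (1 + y) = w + w * y := by noncomm_ring
          rw [h2] at hw1
          rw [← hw1]; noncomm_ring
        rw [h1]; exact mulF w hyF
      have heF : e ∈ F (p + 1) := by
        have h1 : e = (1 - w) * y + (w * y - w * y) := by
          rw [hedef]
          have h2 : w * (1 + y) = w + w * y := by noncomm_ring
          rw [h2] at hw1
          have h3 : w = 1 - w * y := by rw [← hw1]; noncomm_ring
          nth_rewrite 1 [h3]; noncomm_ring
        rw [h1]
        simp only [sub_self, add_zero]
        exact FmonoLe (by omega) (Fmul' rfl h1mw hyF)
      refine ⟨((1 + y) * u, v * w), fun _ _ => ?_⟩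
      have hu'0 : (1 + y) * u ∈ deg 0 := by simpa using mul_mem h1y0 hu0
      have hv'0 : v * w ∈ deg 0 := by simpa using mul_mem hv0 hw0
      have hu'v' : ((1 + y) * u) * (v * w) = 1 := by
        rw [mul_assoc, ← mul_assoc u, huv, one_mul, h1w]
      have hv'u' : (v * w) * ((1 + y) * u) = 1 := by
        rw [mul_assoc, ← mul_assoc w, hw1, one_mul, hvu]
      have hu'1 : (1 + y) * u - 1 ∈ F 1 := by
        have h1 : (1 + y) * u - 1 = (u - 1) + y * u := by noncomm_ring
        rw [h1]
        exact Submodule.add_mem _ hu1 (FmonoLe hp1 (Fmul'' u hyF))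
      have hdiff : ((1 + y) * u) - u ∈ F p := by
        have h1 : ((1 + y) * u) - u = y * u := by noncomm_ring
        rw [h1]; exact Fmul'' u hyF
      refine ⟨⟨hu'0, hv'0, hu'1, hu'v', hv'u', ?_⟩, hdiff⟩
      simp only
      -- main estimate
      have hdu' : d ((1 + y) * u) = d y * u + (1 + y) * d u := by
        rw [leib0 h1y0, map_add, d1, zero_add]
      have hω''eq : ((1 + y) * u) * ω * (v * w) - d ((1 + y) * u) * (v * w)
          = (1 + y) * ω' * w - d y * w := by
        rw [hdu', hω'def]
        have huv' : ∀ a : A, u * (v * a) = a := fun a => by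
          rw [← mul_assoc, huv, one_mul]
        simp only [mul_assoc, sub_mul, mul_sub, add_mul, mul_add]
        simp only [huv']
        noncomm_ring
      rw [hω''eq]
      have hw : w = (1 - y) + e := by rw [hedef]; noncomm_ring
      have decomp : (1 + y) * ω' * w - d y * w - θ
          = (x - (d y + ω * y - y * ω)) + y * (ω' - ω) - (ω' - ω) * y
            - (y * ω') * y + ((1 + y) * ω') * e + (d y) * y - (d y) * e := by
        rw [hw, hxdef]; noncomm_ring
      rw [decomp]
      refine Submodule.sub_mem _ (Submodule.add_mem _
        (Submodule.add_mem _ (Submodule.sub_mem _ (Submodule.sub_mem _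
          (Submodule.add_mem _ hykey ?_) ?_) ?_) ?_) ?_) ?_
      · exact FmonoLe (by omega) (Fmul' rfl hyF hω'ω)
      · exact FmonoLe (by omega) (Fmul' rfl hω'ω hyF)
      · exact FmonoLe (by omega) (Fmul' rfl (Fmul'' ω' hyF) hyF)
      · exact mulF _ heF
      · exact FmonoLe (by omega) (Fmul' rfl (F_d p y hyF) hyF)
      · exact mulF _ heF
    · exact ⟨uv, fun h1 h2 => absurd ⟨h1, h2⟩ h⟩
  -- build the sequence
  choose step hstep using key
  set U : ℕ → A × A := fun n => Nat.rec ((1 : A), (1 : A)) (fun q prev => step (r + q) prev) n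
    with hU
  have hUsucc : ∀ n, U (n + 1) = step (r + n) (U n) := fun n => rfl
  have hInv : ∀ n, Inv5 deg F d ω θ (r + n) (U n) := by
    intro n
    induction n with
    | zero =>
      refine ⟨one_mem, one_mem, show (1:A)-1 ∈ F 1 by simp, one_mul 1, one_mul 1, ?_⟩
      show (1 : A) * ω * 1 - d 1 * 1 - θ ∈ F (r + 0)
      rw [d1]
      simpa using hcong
    | succ n ih =>
      rw [hUsucc n]
      have := (hstep (r + n) (U n) (Nat.le_add_right r n) ih).1
      rwa [show r + n + 1 = r + (n + 1) by omega] at this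
  have hdiffs : ∀ n, (U (n + 1)).1 - (U n).1 ∈ F (r + n) := by
    intro n
    rw [hUsucc n]
    exact (hstep (r + n) (U n) (Nat.le_add_right r n) (hInv n)).2
  set xseq : ℕ → A := fun p => (U (p - r)).1 with hxseq
  have hxd : ∀ p, xseq (p + 1) - xseq p ∈ F p := by
    intro p
    rcases le_or_gt (p + 1) r with h | h
    · have h1 : p + 1 - r = 0 := by omega
      have h2 : p - r = 0 := by omega
      simp only [hxseq, h1, h2, sub_self]
      exact Submodule.zero_mem _
    · have h1 : p + 1 - r = (p - r) + 1 := by omega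
      simp only [hxseq, h1]
      have := hdiffs (p - r)
      rwa [show r + (p - r) = p by omega] at this
  obtain ⟨u, hu⟩ := complete xseq hxd
  have hu0 : u ∈ deg 0 := deg_closed 0 u (fun p => ⟨xseq p, (hInv (p - r)).1, hu p⟩)
  have hu1f : u - 1 ∈ F 1 := by
    have h1 : xseq 1 = 1 := by
      simp only [hxseq, show 1 - r = 0 by omega]
      rfl
    have := hu 1; rwa [h1] at this
  obtain ⟨v, huv, hvu, hv0⟩ := invLemma u hu1f hu0
  refine ⟨u, v, hu0, hu1f, huv, hvu, ?_⟩
  have hT0 : u * ω * v - d u * v - θ = 0 := by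
    apply separated
    intro p
    apply FmonoLe (le_max_left p r)
    set P : ℕ := max p r with hP
    set n : ℕ := P - r with hn
    set up : A := (U n).1 with hup
    set vp : A := (U n).2 with hvp
    obtain ⟨hup0, hvp0, hup1, hupvp, hvpup, hτp⟩ := hInv n
    have hrn : r + n = P := by omega
    have hτP : up * ω * vp - d up * vp - θ ∈ F P := by rwa [hrn] at hτp
    have hupF : u - up ∈ F P := by
      have := hu P
      simpa only [hxseq, hup, hn] using this
    have hupF' : up - u ∈ F P := by
      have := Submodule.neg_mem _ hupF; simpa using this
    have hvpF : v - vp ∈ F P := by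
      have h1 : v - vp = v * ((up - u) * vp) := by
        calc v - vp = v * (up * vp) - (v * u) * vp := by rw [hupvp, hvu, mul_one, one_mul]
          _ = v * ((up - u) * vp) := by noncomm_ring
      rw [h1]
      exact mulF v (Fmul'' vp hupF')
    have hTeq : u * ω * v - d u * v - θ
        = ((u - up) * ω) * v + (up * ω) * (v - vp) + (up * ω * vp - d up * vp - θ)
          + (d up - d u) * v + (d up) * (vp - v) := by
      noncomm_ring
    rw [hTeq]
    refine Submodule.add_mem _ (Submodule.add_mem _ (Submodule.add_mem _
      (Submodule.add_mem _ ?_ ?_) hτP) ?_) ?_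
    · exact Fmul'' v (Fmul'' ω hupF)
    · exact mulF _ hvpF
    · have h1 : d up - d u = d (up - u) := by rw [map_sub]
      rw [h1]
      exact Fmul'' v (F_d P _ hupF')
    · have h2 : vp - v ∈ F P := by have := Submodule.neg_mem _ hvpF; simpa using this
      exact mulF _ h2
  have h2 : (u * ω * v - θ) - d u * v = u * ω * v - d u * v - θ := by noncomm_ring
  exact sub_eq_zero.mp (h2 ▸ hT0)
end

section
/- Let (A,d) and (B,d) be complete DGAs with Maurer-Cartan elements θ ∈ MC(A) and ω ∈ MC(B), and let (P,d) be a complete DG A-B-bimodule. Let r ≥ 1 and suppose H¹(F_p P / F_{p+1} P, d_{ω,θ}) = 0 for all p ≥ r, where d_{ω,θ}(x) = d(x) + θx − (−1)^{|x|} xω. Then for any x ∈ P^0 satisfying xω − θx ≡ dx mod F_r P, there exists y ∈ P^0 with yω − θy = dy and y ≡ x mod F_r P. Moreover, if additionally H⁰(F_p P / F_{p+1} P, d_{ω,θ}) = 0 for all p ≥ r, then any two such y, y' are homotopic: there exists h ∈ P^{−1} with y − y' = dh + hω + θh. -/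
/-!
Successive approximation along the filtration. If `w` solves `d_{ω,θ} w = c` modulo `F_p P`
with `p ≥ r`, the error `c - d_{ω,θ} w` is a `d_{ω,θ}`-cocycle in `F_p P` (as `d_{ω,θ}² = 0` by
the Maurer-Cartan equations), so the vanishing of the cohomology of `F_p P / F_{p+1} P` corrects
`w` by an element of `F_p P` into a solution modulo `F_{p+1} P`. By completeness the corrections
converge, and by separatedness the limit is an exact solution. Existence is the case of degree 0
with `c = 0`; for uniqueness, `y - y'` is a 0-cocycle and is hit by some `h` of degree `-1`.
-/

section Approximation

variable {R M N : Type*} [Ring R] [AddCommGroup M] [Module R M] [AddCommGroup N] [Module R N]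
  {F : ℕ → Submodule R M} {G : ℕ → Submodule R N}

theorem exists_eq_of_approx_step (hF : Antitone F) (hG : Antitone G)
    (complete : ∀ x : ℕ → M, (∀ p, x (p + 1) - x p ∈ F p) → ∃ y, ∀ p, y - x p ∈ F p)
    (separated : ∀ z : N, (∀ p, z ∈ G p) → z = 0)
    {S : Set M} (hS : ∀ x, (∀ p, ∃ y ∈ S, x - y ∈ F p) → x ∈ S)
    (f : M →ₗ[R] N) (hf : ∀ p, ∀ x ∈ F p, f x ∈ G p) (c : N) (r : ℕ)
    (step : ∀ p, r ≤ p → ∀ w ∈ S, f w - c ∈ G p →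
      ∃ w' ∈ S, w' - w ∈ F p ∧ f w' - c ∈ G (p + 1))
    {x : M} (hx : x ∈ S) (hxc : f x - c ∈ G r) :
    ∃ y ∈ S, f y = c ∧ y - x ∈ F r := by
  -- Below level `r` the sequence is kept constant; this makes every step uniform in `p`.
  have step_max : ∀ p (w : {w // w ∈ S ∧ f w - c ∈ G (max p r)}),
      ∃ w' : {w // w ∈ S ∧ f w - c ∈ G (max (p + 1) r)}, (w' : M) - w ∈ F (max p r) := by
    intro p w
    obtain ⟨hwS, hwc⟩ := w.2
    by_cases hp : r ≤ p
    · obtain ⟨w', hw'S, hw'w, hw'c⟩ := step p hp w hwS (hG (le_max_left p r) hwc)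
      exact ⟨⟨w', hw'S, hG (by omega) hw'c⟩, hF (by omega) hw'w⟩
    · exact ⟨⟨w, hwS, hG (by omega) hwc⟩, by simp⟩
  choose next hnext using step_max
  let approx : ∀ p, {w // w ∈ S ∧ f w - c ∈ G (max p r)} :=
    fun p => Nat.rec (motive := fun p => {w // w ∈ S ∧ f w - c ∈ G (max p r)})
      ⟨x, hx, by simpa using hxc⟩ next p
  have happrox_succ (p : ℕ) : (approx (p + 1)).1 - (approx p).1 ∈ F (max p r) :=
    hnext p (approx p)
  have happrox_x : ∀ p, (approx p).1 - x ∈ F r := by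
    intro p
    induction p with
    | zero => simp [approx]
    | succ p ih =>
      simpa using add_mem (hF (le_max_right p r) (happrox_succ p)) ih
  obtain ⟨y, hy⟩ := complete (fun p => (approx p).1) fun p => hF (le_max_left p r) (happrox_succ p)
  refine ⟨y, hS y fun p => ⟨(approx p).1, (approx p).2.1, hy p⟩, ?_, ?_⟩
  · refine sub_eq_zero.mp (separated _ fun p => ?_)
    have hfy : f y - c = f (y - (approx p).1) + (f (approx p).1 - c) := by rw [map_sub]; abel
    rw [hfy]
    exact add_mem (hf p _ (hy p)) (hG (le_max_left p r) (approx p).2.2)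
  · simpa using add_mem (hy r) (happrox_x r)

variable {deg : ℤ → Submodule R M} {d : ℤ → M →ₗ[R] M}

theorem exists_eq_of_gr_cohomology_vanishing {n : ℤ} (hF : Antitone F)
    (complete : ∀ x : ℕ → M, (∀ p, x (p + 1) - x p ∈ F p) → ∃ y, ∀ p, y - x p ∈ F p)
    (separated : ∀ z : M, (∀ p, z ∈ F p) → z = 0)
    (hclosed : ∀ x, (∀ p, ∃ y ∈ deg n, x - y ∈ F p) → x ∈ deg n)
    (hd_filt : ∀ p, ∀ x ∈ F p, d n x ∈ F p)
    (hd_deg : ∀ x ∈ deg n, d n x ∈ deg (n + 1))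
    (hdd : ∀ x ∈ deg n, d (n + 1) (d n x) = 0) (r : ℕ)
    (vanish : ∀ p, r ≤ p → ∀ e ∈ F p, e ∈ deg (n + 1) → d (n + 1) e ∈ F (p + 1) →
      ∃ u ∈ F p, u ∈ deg n ∧ e - d n u ∈ F (p + 1))
    {c : M} (hc : c ∈ deg (n + 1)) (hdc : d (n + 1) c = 0)
    {x : M} (hx : x ∈ deg n) (hxc : d n x - c ∈ F r) :
    ∃ y ∈ deg n, d n y = c ∧ y - x ∈ F r := by
  refine exists_eq_of_approx_step hF hF complete separated hclosed (d n) hd_filt c r ?_ hx hxc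
  intro p hp w hw hwc
  have he : c - d n w ∈ F p := by simpa using neg_mem hwc
  have he_deg : c - d n w ∈ deg (n + 1) := sub_mem hc (hd_deg w hw)
  have he_closed : d (n + 1) (c - d n w) = 0 := by rw [map_sub, hdc, hdd w hw, sub_zero]
  obtain ⟨u, huF, hu, hue⟩ := vanish p hp _ he he_deg (by simp [he_closed])
  refine ⟨w + u, add_mem hw hu, by simpa using huF, ?_⟩
  have hw' : d n (w + u) - c = -(c - d n w - d n u) := by rw [map_add]; abel
  rw [hw']
  exact neg_mem hue

end Approximation

section Twisted

variable {A B P : Type*} [Ring A] [Algebra ℝ A] [Ring B] [Algebra ℝ B]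
  [AddCommGroup P] [Module ℝ P] [Module A P] [Module Bᵐᵒᵖ P]
  [IsScalarTower ℝ A P] [IsScalarTower ℝ Bᵐᵒᵖ P]

/-- The twisted differential `d_{ω,θ}` on elements of degree `n`. -/
noncomputable def twistedDiff (dP : P →ₗ[ℝ] P) (θ : A) (ω : B) (n : ℤ) : P →ₗ[ℝ] P :=
  dP + DistribSMul.toLinearMap ℝ P θ -
    ((-1 : ℝ) ^ n) • DistribSMul.toLinearMap ℝ P (MulOpposite.op ω)

variable {dP : P →ₗ[ℝ] P} {θ : A} {ω : B}

@[simp]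
theorem twistedDiff_apply (n : ℤ) (x : P) :
    twistedDiff dP θ ω n x = dP x + θ • x - (-1 : ℝ) ^ n • MulOpposite.op ω • x :=
  rfl

theorem twistedDiff_zero_apply (x : P) :
    twistedDiff dP θ ω 0 x = -(MulOpposite.op ω • x - θ • x - dP x) := by
  simp only [twistedDiff_apply, zpow_zero, one_smul]
  abel

theorem twistedDiff_mem_filtration {FA : ℕ → Submodule ℝ A} {FB : ℕ → Submodule ℝ B}
    {FP : ℕ → Submodule ℝ P} (FA_zero : FA 0 = ⊤) (FB_zero : FB 0 = ⊤)
    (FP_smulL : ∀ p q : ℕ, ∀ (a : A) (x : P), a ∈ FA p → x ∈ FP q → a • x ∈ FP (p + q))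
    (FP_smulR : ∀ p q : ℕ, ∀ (b : B) (x : P), b ∈ FB p → x ∈ FP q →
      MulOpposite.op b • x ∈ FP (p + q))
    (FP_d : ∀ p : ℕ, ∀ x ∈ FP p, dP x ∈ FP p) (n : ℤ) {p : ℕ} {x : P} (hx : x ∈ FP p) :
    twistedDiff dP θ ω n x ∈ FP p := by
  have hθx := FP_smulL 0 p θ x (by simp [FA_zero]) hx
  have hωx := FP_smulR 0 p ω x (by simp [FB_zero]) hx
  rw [zero_add] at hθx hωx
  exact sub_mem (add_mem (FP_d p x hx) hθx) (Submodule.smul_mem _ _ hωx)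

theorem twistedDiff_mem_deg {degA : ℤ → Submodule ℝ A} {degB : ℤ → Submodule ℝ B}
    {degP : ℤ → Submodule ℝ P}
    (smulL_mem : ∀ {m n : ℤ} {a : A} {x : P}, a ∈ degA m → x ∈ degP n → a • x ∈ degP (m + n))
    (smulR_mem : ∀ {m n : ℤ} {b : B} {x : P}, b ∈ degB m → x ∈ degP n →
      MulOpposite.op b • x ∈ degP (m + n))
    (dP_deg : ∀ {n : ℤ} {x : P}, x ∈ degP n → dP x ∈ degP (n + 1))
    (hθ : θ ∈ degA 1) (hω : ω ∈ degB 1) {n : ℤ} {x : P} (hx : x ∈ degP n) :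
    twistedDiff dP θ ω n x ∈ degP (n + 1) := by
  have hθx := smulL_mem hθ hx
  have hωx := smulR_mem hω hx
  rw [add_comm] at hθx hωx
  exact sub_mem (add_mem (dP_deg hx) hθx) (Submodule.smul_mem _ _ hωx)

/-- `d_{ω,θ}² = 0`: the error terms are `(dθ + θ²) x` and `x (dω + ω²)`. -/
theorem twistedDiff_twistedDiff [SMulCommClass A Bᵐᵒᵖ P] {degA : ℤ → Submodule ℝ A}
    {degP : ℤ → Submodule ℝ P} {dA : A →ₗ[ℝ] A} {dB : B →ₗ[ℝ] B}
    (dP_sq : ∀ x : P, dP (dP x) = 0)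
    (dP_leibL : ∀ {n : ℤ} {a : A} {x : P}, a ∈ degA n →
      dP (a • x) = dA a • x + ((-1 : ℝ) ^ n) • (a • dP x))
    (dP_leibR : ∀ {n : ℤ} {b : B} {x : P}, x ∈ degP n →
      dP (MulOpposite.op b • x) =
        MulOpposite.op b • dP x + ((-1 : ℝ) ^ n) • (MulOpposite.op (dB b) • x))
    (hθdeg : θ ∈ degA 1) (hθ : dA θ + θ * θ = 0) (hω : dB ω + ω * ω = 0)
    {n : ℤ} {x : P} (hx : x ∈ degP n) :
    twistedDiff dP θ ω (n + 1) (twistedDiff dP θ ω n x) = 0 := by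
  have hsign : (-1 : ℝ) ^ n * (-1) ^ n = 1 := by
    rw [← mul_zpow, neg_one_mul, neg_neg, one_zpow]
  have hθθ : dA θ = -(θ * θ) := eq_neg_of_add_eq_zero_left hθ
  have hωω : dB ω = -(ω * ω) := eq_neg_of_add_eq_zero_left hω
  simp only [twistedDiff_apply, map_sub, map_add, map_smul, dP_leibL hθdeg, dP_leibR hx, dP_sq,
    zpow_add_one₀ (by norm_num : (-1 : ℝ) ≠ 0), zpow_one]
  generalize (-1 : ℝ) ^ n = s at hsign ⊢
  simp only [smul_add, smul_sub, smul_smul, smul_comm θ (MulOpposite.op ω), mul_neg, mul_one,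
    neg_smul, hsign, one_smul, ← mul_smul θ, ← MulOpposite.op_mul, hθθ, hωω, MulOpposite.op_neg,
    smul_neg]
  abel

end Twisted

theorem stmt6_general {A B P : Type} [Ring A] [Algebra ℝ A] [Ring B] [Algebra ℝ B]
    [AddCommGroup P] [Module ℝ P] [Module A P] [Module Bᵐᵒᵖ P]
    [SMulCommClass A Bᵐᵒᵖ P] [IsScalarTower ℝ A P] [IsScalarTower ℝ Bᵐᵒᵖ P]
    -- gradings:
    (degA : ℤ → Submodule ℝ A) (degB : ℤ → Submodule ℝ B) (degP : ℤ → Submodule ℝ P)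
    (smulL_mem : ∀ {m n : ℤ} {a : A} {x : P}, a ∈ degA m → x ∈ degP n → a • x ∈ degP (m + n))
    (smulR_mem : ∀ {m n : ℤ} {b : B} {x : P}, b ∈ degB m → x ∈ degP n →
      MulOpposite.op b • x ∈ degP (m + n))
    -- differentials:
    (dA : A →ₗ[ℝ] A) (dB : B →ₗ[ℝ] B) (dP : P →ₗ[ℝ] P)
    (dP_deg : ∀ {n : ℤ} {x : P}, x ∈ degP n → dP x ∈ degP (n + 1))
    (dP_sq : ∀ x : P, dP (dP x) = 0)
    (dP_leibL : ∀ {n : ℤ} {a : A} {x : P}, a ∈ degA n →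
      dP (a • x) = dA a • x + ((-1 : ℝ) ^ n) • (a • dP x))
    (dP_leibR : ∀ {n : ℤ} {b : B} {x : P}, x ∈ degP n →
      dP (MulOpposite.op b • x) =
        MulOpposite.op b • dP x + ((-1 : ℝ) ^ n) • (MulOpposite.op (dB b) • x))
    -- filtrations:
    (FA : ℕ → Submodule ℝ A) (FB : ℕ → Submodule ℝ B) (FP : ℕ → Submodule ℝ P)
    (FA_zero : FA 0 = ⊤) (FB_zero : FB 0 = ⊤)
    (FP_mono : ∀ p, FP (p + 1) ≤ FP p)
    (FP_smulL : ∀ p q : ℕ, ∀ (a : A) (x : P), a ∈ FA p → x ∈ FP q → a • x ∈ FP (p + q))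
    (FP_smulR : ∀ p q : ℕ, ∀ (b : B) (x : P), b ∈ FB p → x ∈ FP q →
      MulOpposite.op b • x ∈ FP (p + q))
    (FP_d : ∀ p : ℕ, ∀ x ∈ FP p, dP x ∈ FP p)
    (sepP : ∀ x : P, (∀ p, x ∈ FP p) → x = 0)
    (complP : ∀ x : ℕ → P, (∀ p, x (p + 1) - x p ∈ FP p) → ∃ y : P, ∀ p, y - x p ∈ FP p)
    (degP_closed : ∀ (n : ℤ) (x : P), (∀ p, ∃ y ∈ degP n, x - y ∈ FP p) → x ∈ degP n)
    -- Maurer-Cartan elements: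
    (θ : A) (hθdeg : θ ∈ degA 1) (hθ : dA θ + θ * θ = 0)
    (ω : B) (hωdeg : ω ∈ degB 1) (hω : dB ω + ω * ω = 0)
    (r : ℕ)
    -- H¹(F_p P/F_{p+1} P, d_{ω,θ}) = 0 for all p ≥ r:
    (H1 : ∀ p : ℕ, r ≤ p → ∀ x : P, x ∈ FP p → x ∈ degP 1 →
      dP x + θ • x + MulOpposite.op ω • x ∈ FP (p + 1) →
      ∃ y : P, y ∈ FP p ∧ y ∈ degP 0 ∧
        x - (dP y + θ • y - MulOpposite.op ω • y) ∈ FP (p + 1)) :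
    -- Conclusion 1: correction of approximate Maurer-Cartan morphisms
    (∀ x : P, x ∈ degP 0 → MulOpposite.op ω • x - θ • x - dP x ∈ FP r →
      ∃ y : P, y ∈ degP 0 ∧ MulOpposite.op ω • y - θ • y = dP y ∧ y - x ∈ FP r) ∧
    -- Conclusion 2: uniqueness up to homotopy, under the extra H⁰ hypothesis
    ((∀ p : ℕ, r ≤ p → ∀ x : P, x ∈ FP p → x ∈ degP 0 →
        dP x + θ • x - MulOpposite.op ω • x ∈ FP (p + 1) →
        ∃ z : P, z ∈ FP p ∧ z ∈ degP (-1) ∧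
          x - (dP z + θ • z + MulOpposite.op ω • z) ∈ FP (p + 1)) →
      ∀ x y y' : P, x ∈ degP 0 →
        MulOpposite.op ω • x - θ • x - dP x ∈ FP r →
        y ∈ degP 0 → MulOpposite.op ω • y - θ • y = dP y → y - x ∈ FP r →
        y' ∈ degP 0 → MulOpposite.op ω • y' - θ • y' = dP y' → y' - x ∈ FP r →
        ∃ h : P, h ∈ degP (-1) ∧
          y - y' = dP h + MulOpposite.op ω • h + θ • h) := by
  set d := twistedDiff dP θ ω
  have d_filt (n : ℤ) (p : ℕ) (x : P) (hx : x ∈ FP p) : d n x ∈ FP p :=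
    twistedDiff_mem_filtration FA_zero FB_zero FP_smulL FP_smulR FP_d n hx
  have d_deg {n : ℤ} {x : P} (hx : x ∈ degP n) : d n x ∈ degP (n + 1) :=
    twistedDiff_mem_deg smulL_mem smulR_mem dP_deg hθdeg hωdeg hx
  have d_d {n : ℤ} {x : P} (hx : x ∈ degP n) : d (n + 1) (d n x) = 0 :=
    twistedDiff_twistedDiff dP_sq dP_leibL dP_leibR hθdeg hθ hω hx
  have d_zero_eq_zero {y : P} (hy : MulOpposite.op ω • y - θ • y = dP y) : d 0 y = 0 := by
    rw [twistedDiff_zero_apply, hy, sub_self, neg_zero]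
  have hFP : Antitone FP := antitone_nat_of_succ_le FP_mono
  refine ⟨fun x hx hxr => ?_, fun H0 x y y' _ _ hy hyMC hyx hy' hy'MC hy'x => ?_⟩
  · obtain ⟨y, hy, hdy, hyx⟩ := exists_eq_of_gr_cohomology_vanishing (n := 0) hFP complP sepP
      (degP_closed 0) (d_filt 0) (fun _ => d_deg) (fun _ => d_d) r
      (fun p hp e he he1 hde => by
        simpa [d] using H1 p hp e he (by simpa using he1) (by simpa [d] using hde))
      (zero_mem _) (map_zero _) hx (by rw [sub_zero, twistedDiff_zero_apply]; exact neg_mem hxr)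
    refine ⟨y, hy, ?_, hyx⟩
    rw [twistedDiff_zero_apply, neg_eq_zero, sub_eq_zero] at hdy
    exact hdy
  · obtain ⟨h, hh, hdh, -⟩ := exists_eq_of_gr_cohomology_vanishing (n := -1) (c := y - y') hFP
      complP sepP (degP_closed (-1)) (d_filt (-1)) (fun _ => d_deg) (fun _ => d_d) r
      (fun p hp e he he0 hde => by
        simpa [d] using H0 p hp e he (by simpa using he0) (by simpa [d] using hde))
      (by simpa using sub_mem hy hy') (by simp [d_zero_eq_zero hyMC, d_zero_eq_zero hy'MC])
      (zero_mem _) (by simpa using sub_mem hy'x hyx)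
    refine ⟨h, hh, ?_⟩
    rw [← hdh, twistedDiff_apply, zpow_neg_one, inv_neg, inv_one, neg_smul, one_smul,
      sub_neg_eq_add, add_right_comm]

theorem stmt6 {A B P : Type} [Ring A] [Algebra ℝ A] [Ring B] [Algebra ℝ B]
    [AddCommGroup P] [Module ℝ P] [Module A P] [Module Bᵐᵒᵖ P]
    [SMulCommClass A Bᵐᵒᵖ P] [IsScalarTower ℝ A P] [IsScalarTower ℝ Bᵐᵒᵖ P]
    -- gradings:
    (degA : ℤ → Submodule ℝ A) (degB : ℤ → Submodule ℝ B) (degP : ℤ → Submodule ℝ P)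
    (mulA_mem : ∀ {m n : ℤ} {a b : A}, a ∈ degA m → b ∈ degA n → a * b ∈ degA (m + n))
    (mulB_mem : ∀ {m n : ℤ} {a b : B}, a ∈ degB m → b ∈ degB n → a * b ∈ degB (m + n))
    (smulL_mem : ∀ {m n : ℤ} {a : A} {x : P}, a ∈ degA m → x ∈ degP n → a • x ∈ degP (m + n))
    (smulR_mem : ∀ {m n : ℤ} {b : B} {x : P}, b ∈ degB m → x ∈ degP n →
      MulOpposite.op b • x ∈ degP (m + n))
    -- differentials:
    (dA : A →ₗ[ℝ] A) (dB : B →ₗ[ℝ] B) (dP : P →ₗ[ℝ] P)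
    (dA_deg : ∀ {n : ℤ} {a : A}, a ∈ degA n → dA a ∈ degA (n + 1))
    (dB_deg : ∀ {n : ℤ} {b : B}, b ∈ degB n → dB b ∈ degB (n + 1))
    (dP_deg : ∀ {n : ℤ} {x : P}, x ∈ degP n → dP x ∈ degP (n + 1))
    (dA_sq : ∀ a : A, dA (dA a) = 0) (dB_sq : ∀ b : B, dB (dB b) = 0)
    (dP_sq : ∀ x : P, dP (dP x) = 0)
    (dA_leib : ∀ {n : ℤ} {a b : A}, a ∈ degA n →
      dA (a * b) = dA a * b + ((-1 : ℝ) ^ n) • (a * dA b))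
    (dB_leib : ∀ {n : ℤ} {a b : B}, a ∈ degB n →
      dB (a * b) = dB a * b + ((-1 : ℝ) ^ n) • (a * dB b))
    (dP_leibL : ∀ {n : ℤ} {a : A} {x : P}, a ∈ degA n →
      dP (a • x) = dA a • x + ((-1 : ℝ) ^ n) • (a • dP x))
    (dP_leibR : ∀ {n : ℤ} {b : B} {x : P}, x ∈ degP n →
      dP (MulOpposite.op b • x) =
        MulOpposite.op b • dP x + ((-1 : ℝ) ^ n) • (MulOpposite.op (dB b) • x))
    -- filtrations:
    (FA : ℕ → Submodule ℝ A) (FB : ℕ → Submodule ℝ B) (FP : ℕ → Submodule ℝ P)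
    (FA_zero : FA 0 = ⊤) (FB_zero : FB 0 = ⊤) (FP_zero : FP 0 = ⊤)
    (FA_mono : ∀ p, FA (p + 1) ≤ FA p) (FB_mono : ∀ p, FB (p + 1) ≤ FB p)
    (FP_mono : ∀ p, FP (p + 1) ≤ FP p)
    (FA_mul : ∀ p q : ℕ, ∀ a b : A, a ∈ FA p → b ∈ FA q → a * b ∈ FA (p + q))
    (FB_mul : ∀ p q : ℕ, ∀ a b : B, a ∈ FB p → b ∈ FB q → a * b ∈ FB (p + q))
    (FP_smulL : ∀ p q : ℕ, ∀ (a : A) (x : P), a ∈ FA p → x ∈ FP q → a • x ∈ FP (p + q))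
    (FP_smulR : ∀ p q : ℕ, ∀ (b : B) (x : P), b ∈ FB p → x ∈ FP q →
      MulOpposite.op b • x ∈ FP (p + q))
    (FA_d : ∀ p : ℕ, ∀ a ∈ FA p, dA a ∈ FA p) (FB_d : ∀ p : ℕ, ∀ b ∈ FB p, dB b ∈ FB p)
    (FP_d : ∀ p : ℕ, ∀ x ∈ FP p, dP x ∈ FP p)
    (sepP : ∀ x : P, (∀ p, x ∈ FP p) → x = 0)
    (complP : ∀ x : ℕ → P, (∀ p, x (p + 1) - x p ∈ FP p) → ∃ y : P, ∀ p, y - x p ∈ FP p)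
    (degP_closed : ∀ (n : ℤ) (x : P), (∀ p, ∃ y ∈ degP n, x - y ∈ FP p) → x ∈ degP n)
    -- Maurer-Cartan elements:
    (θ : A) (hθdeg : θ ∈ degA 1) (hθ : dA θ + θ * θ = 0)
    (ω : B) (hωdeg : ω ∈ degB 1) (hω : dB ω + ω * ω = 0)
    (r : ℕ) (hr : 1 ≤ r)
    -- H¹(F_p P/F_{p+1} P, d_{ω,θ}) = 0 for all p ≥ r:
    (H1 : ∀ p : ℕ, r ≤ p → ∀ x : P, x ∈ FP p → x ∈ degP 1 →
      dP x + θ • x + MulOpposite.op ω • x ∈ FP (p + 1) →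
      ∃ y : P, y ∈ FP p ∧ y ∈ degP 0 ∧
        x - (dP y + θ • y - MulOpposite.op ω • y) ∈ FP (p + 1)) :
    -- Conclusion 1: correction of approximate Maurer-Cartan morphisms
    (∀ x : P, x ∈ degP 0 → MulOpposite.op ω • x - θ • x - dP x ∈ FP r →
      ∃ y : P, y ∈ degP 0 ∧ MulOpposite.op ω • y - θ • y = dP y ∧ y - x ∈ FP r) ∧
    -- Conclusion 2: uniqueness up to homotopy, under the extra H⁰ hypothesis
    ((∀ p : ℕ, r ≤ p → ∀ x : P, x ∈ FP p → x ∈ degP 0 →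
        dP x + θ • x - MulOpposite.op ω • x ∈ FP (p + 1) →
        ∃ z : P, z ∈ FP p ∧ z ∈ degP (-1) ∧
          x - (dP z + θ • z + MulOpposite.op ω • z) ∈ FP (p + 1)) →
      ∀ x y y' : P, x ∈ degP 0 →
        MulOpposite.op ω • x - θ • x - dP x ∈ FP r →
        y ∈ degP 0 → MulOpposite.op ω • y - θ • y = dP y → y - x ∈ FP r →
        y' ∈ degP 0 → MulOpposite.op ω • y' - θ • y' = dP y' → y' - x ∈ FP r →
        ∃ h : P, h ∈ degP (-1) ∧
          y - y' = dP h + MulOpposite.op ω • h + θ • h) :=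
  stmt6_general degA degB degP smulL_mem smulR_mem dA dB dP dP_deg dP_sq dP_leibL dP_leibR FA FB FP
    FA_zero FB_zero FP_mono FP_smulL FP_smulR FP_d sepP complP degP_closed θ hθdeg hθ ω hωdeg hω r
    H1
end

section
/- Let A be a DGA, P a DG A-bimodule, ω ∈ A¹ a Maurer-Cartan element, and ζ, ζ' two Hochschild 0-cocycles in C^0(A,P) that are cohomologous (ζ − ζ' = D(η) for a degree −1 cochain η, where D is the total Hochschild differential). Then the associated Maurer-Cartan morphisms ζ̂(ω) and ζ̂'(ω) in P(ω,ω) are homotopic: there exists h ∈ P^{−1} with ζ̂(ω) − ζ̂'(ω) = dh + hω + ωh. -/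
/-
STATEMENT 8: Let A be a DGA, P a DG A-bimodule, ω ∈ A¹ a Maurer-Cartan element, and
ζ, ζ' two Hochschild 0-cocycles in C⁰(A,P) which are cohomologous: ζ − ζ' = D(η) for a
degree −1 cochain η = Σ η_k (η_k ∈ C^{k,−k−1}), the total differential being
D = d_v + (−1)^l b.  Then the associated Maurer-Cartan morphisms ζ̂(ω), ζ̂'(ω) ∈ P(ω,ω)
are homotopic: there is h ∈ P^{−1} with ζ̂(ω) − ζ̂'(ω) = dh + hω + ωh.
-/

def mergeArgs {A : Type} [Mul A] (as : ℕ → A) (j : ℕ) : ℕ → A :=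
  fun m => if m < j then as m else if m = j then as j * as (j + 1) else as (m + 1)


lemma negOnePow_int_eq_pow (m : ℤ) (n : ℕ) (h : (m - n) % 2 = 0) :
    ((-1:ℝ)) ^ m = ((-1:ℝ)) ^ n := by
  rcases Int.even_or_odd m with hm | hm
  · rw [hm.neg_one_zpow]
    have hn : Even n := by rw [Int.even_iff] at hm; rw [Nat.even_iff]; omega
    rw [hn.neg_one_pow]
  · rw [hm.neg_one_zpow]
    have hn : Odd n := by rw [Int.odd_iff] at hm; rw [Nat.odd_iff]; omega
    rw [hn.neg_one_pow]

lemma negOnePow_nat_congr (a b : ℕ) (h : a % 2 = b % 2) : ((-1:ℝ))^a = (-1:ℝ)^b := by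
  rcases Nat.even_or_odd a with ha | ha
  · rw [ha.neg_one_pow]
    have : Even b := by rw [Nat.even_iff] at *; omega
    rw [this.neg_one_pow]
  · rw [ha.neg_one_pow]
    have : Odd b := by rw [Nat.odd_iff] at *; omega
    rw [this.neg_one_pow]

theorem stmt8 {A P : Type} [Ring A] [Algebra ℝ A]
    [AddCommGroup P] [Module ℝ P] [Module A P] [Module Aᵐᵒᵖ P]
    [SMulCommClass A Aᵐᵒᵖ P] [IsScalarTower ℝ A P] [IsScalarTower ℝ Aᵐᵒᵖ P]
    (degA : ℤ → Submodule ℝ A)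
    (mulA_mem : ∀ {m n : ℤ} {a b : A}, a ∈ degA m → b ∈ degA n → a * b ∈ degA (m + n))
    (dA : A →ₗ[ℝ] A)
    (dA_deg : ∀ {n : ℤ} {a : A}, a ∈ degA n → dA a ∈ degA (n + 1))
    (dA_sq : ∀ a : A, dA (dA a) = 0)
    (dA_leib : ∀ {n : ℤ} {a b : A}, a ∈ degA n →
      dA (a * b) = dA a * b + ((-1 : ℝ) ^ n) • (a * dA b))
    (degP : ℤ → Submodule ℝ P)
    (smulL_mem : ∀ {m n : ℤ} {a : A} {x : P}, a ∈ degA m → x ∈ degP n → a • x ∈ degP (m + n))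
    (smulR_mem : ∀ {m n : ℤ} {a : A} {x : P}, a ∈ degA m → x ∈ degP n →
      MulOpposite.op a • x ∈ degP (m + n))
    (dP : P →ₗ[ℝ] P)
    (dP_deg : ∀ {n : ℤ} {x : P}, x ∈ degP n → dP x ∈ degP (n + 1))
    (dP_sq : ∀ x : P, dP (dP x) = 0)
    (dP_leibL : ∀ {n : ℤ} {a : A} {x : P}, a ∈ degA n →
      dP (a • x) = dA a • x + ((-1 : ℝ) ^ n) • (a • dP x))
    (dP_leibR : ∀ {n : ℤ} {a : A} {x : P}, x ∈ degP n →
      dP (MulOpposite.op a • x) =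
        MulOpposite.op a • dP x + ((-1 : ℝ) ^ n) • (MulOpposite.op (dA a) • x))
    (N : ℕ) (ζ ζ' η : ℕ → (ℕ → A) → P)
    -- ζ, ζ', η are multilinear cochains (of ℤ-degrees −k, −k, −k−1 in C^{k,•}) depending
    -- only on their first k arguments, all vanishing beyond k = N:
    (hdep : ∀ ξ ∈ ({ζ, ζ', η} : Set (ℕ → (ℕ → A) → P)), ∀ (k : ℕ) (as as' : ℕ → A),
      (∀ j < k, as j = as' j) → ξ k as = ξ k as')
    (hadd : ∀ ξ ∈ ({ζ, ζ', η} : Set (ℕ → (ℕ → A) → P)), ∀ (k j : ℕ), j < k →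
      ∀ (as : ℕ → A) (v w : A),
      ξ k (Function.update as j (v + w))
        = ξ k (Function.update as j v) + ξ k (Function.update as j w))
    (hsmul : ∀ ξ ∈ ({ζ, ζ', η} : Set (ℕ → (ℕ → A) → P)), ∀ (k j : ℕ), j < k →
      ∀ (as : ℕ → A) (r : ℝ) (v : A),
      ξ k (Function.update as j (r • v)) = r • ξ k (Function.update as j v))
    (hvanish : ∀ ξ ∈ ({ζ, ζ', η} : Set (ℕ → (ℕ → A) → P)), ∀ k : ℕ, N < k →
      ∀ as : ℕ → A, ξ k as = 0)
    (hdegζ : ∀ (k : ℕ) (n : ℕ → ℤ) (as : ℕ → A), (∀ j < k, as j ∈ degA (n j)) →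
      ζ k as ∈ degP ((∑ j ∈ Finset.range k, n j) - k))
    (hdegζ' : ∀ (k : ℕ) (n : ℕ → ℤ) (as : ℕ → A), (∀ j < k, as j ∈ degA (n j)) →
      ζ' k as ∈ degP ((∑ j ∈ Finset.range k, n j) - k))
    (hdegη : ∀ (k : ℕ) (n : ℕ → ℤ) (as : ℕ → A), (∀ j < k, as j ∈ degA (n j)) →
      η k as ∈ degP ((∑ j ∈ Finset.range k, n j) - k - 1))
    -- ζ and ζ' are cocycles:
    (hcocycle : ∀ ξ ∈ ({ζ, ζ'} : Set (ℕ → (ℕ → A) → P)),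
      ∀ (i : ℕ) (n : ℕ → ℤ) (as : ℕ → A), (∀ j < i + 1, as j ∈ degA (n j)) →
      ( ((-1 : ℝ) ^ ((n 0) * (-(i : ℤ)))) • ((as 0) • ξ i (fun j => as (j + 1)))
        + (∑ j ∈ Finset.range i, ((-1 : ℝ) ^ (j + 1)) • ξ i (mergeArgs as j))
        + ((-1 : ℝ) ^ (i + 1)) • (MulOpposite.op (as i) • ξ i as) )
      + ((-1 : ℝ) ^ i) •
        ( dP (ξ (i + 1) as)
          - ∑ j ∈ Finset.range (i + 1),
              ((-1 : ℝ) ^ ((-(i : ℤ) - 1) + ∑ m ∈ Finset.range j, n m)) •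
                ξ (i + 1) (Function.update as j (dA (as j))) ) = 0)
    -- ζ − ζ' = D(η): in each bidegree (k,−k), (ζ−ζ')_k = d_v(η_k) + (−1)^k b(η_{k−1}):
    (hcohom : ∀ (k : ℕ) (n : ℕ → ℤ) (as : ℕ → A), (∀ j < k, as j ∈ degA (n j)) →
      ζ k as - ζ' k as
        = ( dP (η k as)
            - ∑ j ∈ Finset.range k,
                ((-1 : ℝ) ^ ((-(k : ℤ) - 1) + ∑ m ∈ Finset.range j, n m)) •
                  η k (Function.update as j (dA (as j))) )
          + (if k = 0 then 0 else
              ((-1 : ℝ) ^ k) •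
                ( ((-1 : ℝ) ^ ((n 0) * (-(k : ℤ)))) • ((as 0) • η (k - 1) (fun j => as (j + 1)))
                  + (∑ j ∈ Finset.range (k - 1),
                      ((-1 : ℝ) ^ (j + 1)) • η (k - 1) (mergeArgs as j))
                  + ((-1 : ℝ) ^ k) • (MulOpposite.op (as (k - 1)) • η (k - 1) as) ))) :
    ∀ ω : A, ω ∈ degA 1 → dA ω + ω * ω = 0 →
      ∃ h : P, h ∈ degP (-1) ∧
        (∑ k ∈ Finset.range (N + 1), ζ k (fun _ => ω))
          - (∑ k ∈ Finset.range (N + 1), ζ' k (fun _ => ω))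
        = dP h + MulOpposite.op ω • h + ω • h := by
  intro ω hω hMC
  classical
  have hηmem : η ∈ ({ζ, ζ', η} : Set (ℕ → (ℕ → A) → P)) := by simp
  have hζmem : ζ ∈ ({ζ, ζ', η} : Set (ℕ → (ℕ → A) → P)) := by simp
  have hζ'mem : ζ' ∈ ({ζ, ζ', η} : Set (ℕ → (ℕ → A) → P)) := by simp
  have hdω : dA ω = (-1:ℝ) • (ω * ω) := by
    rw [neg_one_smul]
    exact eq_neg_of_add_eq_zero_left hMC
  have hmerge : ∀ j : ℕ, mergeArgs (fun _ => ω) j = Function.update (fun _ => ω) j (ω * ω) := by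
    intro j
    funext m
    rcases lt_trichotomy m j with h | h | h
    · simp [mergeArgs, Function.update_apply, h, h.ne]
    · subst h
      simp [mergeArgs, Function.update_apply]
    · simp [mergeArgs, Function.update_apply, h.ne', not_lt.mpr h.le]
  have key : ∀ k : ℕ, ζ k (fun _ => ω) - ζ' k (fun _ => ω)
      = dP (η k (fun _ => ω))
        + (∑ j ∈ Finset.range k,
            ((-1:ℝ)) ^ (k + 1 + j) • η k (Function.update (fun _ => ω) j (ω * ω)))
        + (if k = 0 then 0 else
            (ω • η (k - 1) (fun _ => ω) + MulOpposite.op ω • η (k - 1) (fun _ => ω)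
              - ∑ j ∈ Finset.range (k - 1),
                  ((-1:ℝ)) ^ (k + j) • η (k - 1) (Function.update (fun _ => ω) j (ω * ω)))) := by
    intro k
    have hc := hcohom k (fun _ => 1) (fun _ => ω) (fun j _ => hω)
    beta_reduce at hc
    have hterm : ∀ j ∈ Finset.range k,
        ((-1:ℝ)) ^ ((-(k:ℤ) - 1) + ∑ m ∈ Finset.range j, (1:ℤ)) •
            η k (Function.update (fun _ => ω) j (dA ω))
          = -(((-1:ℝ)) ^ (k + 1 + j) • η k (Function.update (fun _ => ω) j (ω * ω))) := by
      intro j hj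
      rw [Finset.mem_range] at hj
      rw [hdω, hsmul η hηmem k j hj (fun _ => ω) (-1) (ω * ω)]
      have h2 : (∑ m ∈ Finset.range j, (1:ℤ)) = (j:ℤ) := by simp
      rw [h2]
      have h3 : ((-1:ℝ)) ^ ((-(k:ℤ) - 1) + (j:ℤ)) = ((-1:ℝ)) ^ (k + 1 + j) := by
        apply negOnePow_int_eq_pow
        push_cast
        omega
      rw [h3, smul_smul, mul_neg_one, neg_smul]
    rw [hc, Finset.sum_congr rfl hterm, Finset.sum_neg_distrib, sub_neg_eq_add]
    congr 1
    rcases k with _ | i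
    · simp
    · rw [if_neg (Nat.succ_ne_zero i), if_neg (Nat.succ_ne_zero i)]
      simp only [Nat.add_sub_cancel]
      have hz : ((-1:ℝ)) ^ ((1:ℤ) * -((i + 1 : ℕ) : ℤ)) = ((-1:ℝ)) ^ (i + 1) := by
        apply negOnePow_int_eq_pow
        push_cast
        omega
      rw [hz]
      have hmid : (∑ j ∈ Finset.range i, ((-1:ℝ)) ^ (j + 1) • η i (mergeArgs (fun _ => ω) j))
          = ∑ j ∈ Finset.range i,
              ((-1:ℝ)) ^ (j + 1) • η i (Function.update (fun _ => ω) j (ω * ω)) :=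
        Finset.sum_congr rfl fun j _ => by rw [hmerge j]
      rw [hmid]
      have hsq : ((-1:ℝ)) ^ (i + 1) * ((-1:ℝ)) ^ (i + 1) = 1 := by
        rw [← pow_add]
        have heven : Even ((i + 1) + (i + 1)) := ⟨i + 1, rfl⟩
        exact heven.neg_one_pow
      simp only [smul_add, Finset.smul_sum, smul_smul, hsq, one_smul]
      have hmid2 : (∑ j ∈ Finset.range i,
            (((-1:ℝ)) ^ (i + 1) * ((-1:ℝ)) ^ (j + 1)) •
              η i (Function.update (fun _ => ω) j (ω * ω)))
          = -∑ j ∈ Finset.range i,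
              ((-1:ℝ)) ^ (i + 1 + j) • η i (Function.update (fun _ => ω) j (ω * ω)) := by
        rw [← Finset.sum_neg_distrib]
        refine Finset.sum_congr rfl fun j _ => ?_
        rw [← pow_add, ← neg_smul]
        congr 1
        have h4 : -((-1:ℝ)) ^ (i + 1 + j) = ((-1:ℝ)) ^ (i + 1 + j + 1) := by
          rw [pow_succ]; ring
        rw [h4]
        exact negOnePow_nat_congr _ _ (by omega)
      rw [hmid2]
      abel
  have key2 : (∑ j ∈ Finset.range N,
        ((-1:ℝ)) ^ (N + 1 + j) • η N (Function.update (fun _ => ω) j (ω * ω)))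
      = ω • η N (fun _ => ω) + MulOpposite.op ω • η N (fun _ => ω) := by
    have h1 := key (N + 1)
    have h5 : (∑ j ∈ Finset.range (N + 1),
          ((-1:ℝ)) ^ (N + 1 + 1 + j) • η (N + 1) (Function.update (fun _ => ω) j (ω * ω))) = 0 :=
      Finset.sum_eq_zero fun j _ => by
        rw [hvanish η hηmem (N + 1) (by omega) (Function.update (fun _ => ω) j (ω * ω)), smul_zero]
    rw [hvanish ζ hζmem (N + 1) (by omega) (fun _ => ω),
        hvanish ζ' hζ'mem (N + 1) (by omega) (fun _ => ω),
        hvanish η hηmem (N + 1) (by omega) (fun _ => ω), h5,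
        if_neg (Nat.succ_ne_zero N)] at h1
    simp only [Nat.add_sub_cancel, sub_zero, map_zero, zero_add, add_zero] at h1
    exact (sub_eq_zero.mp h1.symm).symm
  refine ⟨∑ k ∈ Finset.range (N + 1), η k (fun _ => ω), ?_, ?_⟩
  · refine Submodule.sum_mem _ fun k _ => ?_
    have hd := hdegη k (fun _ => 1) (fun _ => ω) (fun j _ => hω)
    have he : ((∑ j ∈ Finset.range k, (1:ℤ)) - (k:ℤ) - 1) = -1 := by simp
    rwa [he] at hd
  · rw [← Finset.sum_sub_distrib, Finset.sum_congr rfl fun k _ => key k,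
        Finset.sum_add_distrib, Finset.sum_add_distrib]
    have hdPsum : (∑ k ∈ Finset.range (N + 1), dP (η k (fun _ => ω)))
        = dP (∑ k ∈ Finset.range (N + 1), η k (fun _ => ω)) := (map_sum dP _ _).symm
    have hite : (∑ k ∈ Finset.range (N + 1), (if k = 0 then (0:P) else
          (ω • η (k - 1) (fun _ => ω) + MulOpposite.op ω • η (k - 1) (fun _ => ω)
            - ∑ j ∈ Finset.range (k - 1),
                ((-1:ℝ)) ^ (k + j) • η (k - 1) (Function.update (fun _ => ω) j (ω * ω)))))
        = ∑ i ∈ Finset.range N,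
            (ω • η i (fun _ => ω) + MulOpposite.op ω • η i (fun _ => ω)
              - ∑ j ∈ Finset.range i,
                  ((-1:ℝ)) ^ (i + 1 + j) • η i (Function.update (fun _ => ω) j (ω * ω))) := by
      rw [Finset.sum_range_succ']
      simp
    have hS : (∑ k ∈ Finset.range (N + 1), ∑ j ∈ Finset.range k,
          ((-1:ℝ)) ^ (k + 1 + j) • η k (Function.update (fun _ => ω) j (ω * ω)))
        = (∑ k ∈ Finset.range N, ∑ j ∈ Finset.range k,
            ((-1:ℝ)) ^ (k + 1 + j) • η k (Function.update (fun _ => ω) j (ω * ω)))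
          + (ω • η N (fun _ => ω) + MulOpposite.op ω • η N (fun _ => ω)) := by
      rw [Finset.sum_range_succ, key2]
    rw [hdPsum, hS, hite, Finset.sum_sub_distrib, Finset.sum_add_distrib,
        ← Finset.smul_sum, ← Finset.smul_sum, Finset.sum_range_succ, smul_add, smul_add]
    abel
end

section
/- Let x ∈ (Ω⊠Ω)²(−1) satisfy ∂(x) = c⊠c − a⊠a, and define ω = e⊠e + Σ_{k≥1} x^{⋄k} in the completed algebra. Then ω is a Maurer-Cartan element of the completed DGA associated to Ω⊠Ω: writing ω_k for the k-th component (ω_1 = e⊠e, ω_k = x^{⋄(k−1)} for k ≥ 2), one has ∂(x^{⋄(k−1)}) = Σ_{i=1}^{k−1} (−1)^{i+1} ( x^{⋄(i−1)} ∘ x^{⋄(k−i−1)} − d_i(x^{⋄(k−2)}) ) for all k ≥ 2, where y ∘ z = y ⋄ (c⊠c) ⋄ z and d_i inserts a⊠a at position i. -/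
/-
STATEMENT 12: Let x be an element of (Ω⊠Ω)²(−1) (span of letter pairs with exactly one b)
with ∂x = c⊠c − a⊠a.  Then ω = e⊠e + Σ_{k≥1} x^{⋄k} is a Maurer-Cartan element of the
completed DGA of Ω⊠Ω; componentwise, for all k ≥ 2,
  ∂(x^{⋄(k−1)}) = Σ_{i=1}^{k−1} (−1)^{i+1} ( x^{⋄(i−1)} ∘ x^{⋄(k−i−1)} − d_i(x^{⋄(k−2)}) ),
where y ∘ z = y ⋄ (c⊠c) ⋄ z and d_i(x^{⋄(k−2)}) = x^{⋄(i−1)} ⋄ (a⊠a) ⋄ x^{⋄(k−i−1)}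
(insertion of a⊠a at position i).  Here ⋄ is the componentwise concatenation with
Koszul sign (x₁⊠y₁)⋄(x₂⊠y₂) = (−1)^{l(y₁)l(x₂)} (x₁x₂)⊠(y₁y₂) and the differential on
Ω⊠Ω is the Leibniz extension (with Koszul signs) of ∂b = c−a, ∂a = ∂c = 0 in each factor.
-/

noncomputable section

abbrev P2 : Type := (Word × Word) →₀ ℝ

def W2 (w w' : Word) : P2 := Finsupp.single (w, w') 1

/-- the product ⋄ of Ω⊠Ω : componentwise concatenation with Koszul sign. -/
def tmul (f g : P2) : P2 :=
  f.sum fun p r => g.sum fun q s =>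
    Finsupp.single (p.1 * q.1, p.2 * q.2)
      (r * s * ((-1 : ℝ) ^ (bcount p.2 * bcount q.1)))

/-- iterated ⋄-powers: tpow x k = x^{⋄k}, with x^{⋄0} = e⊠e. -/
def tpow (x : P2) : ℕ → P2
  | 0 => W2 1 1
  | k + 1 => tmul x (tpow x k)

/-- pairs of single letters with exactly one b (the bidegree (2,−1) part of Ω⊠Ω). -/
def Deg2m1 : Submodule ℝ P2 :=
  Submodule.span ℝ ({W2 bW aW, W2 bW cW, W2 aW bW, W2 cW bW} : Set P2)

/-
Each generator of `Deg2m1` contains exactly one `b`, so it is odd and the Koszul–Leibniz rule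
reads ∂(x⋄z) = ∂x⋄z − x⋄∂z. Iterating it along x^{⋄n} = x⋄x^{⋄(n−1)} gives
∂(x^{⋄n}) = Σ_{j<n} (−1)^j x^{⋄j} ⋄ ∂x ⋄ x^{⋄(n−1−j)}; substituting ∂x = c⊠c − a⊠a splits each
term into x^{⋄(i−1)} ∘ x^{⋄(k−1−i)} − d_i(x^{⋄(k−2)}).
-/

def tmulₗ : P2 →ₗ[ℝ] P2 →ₗ[ℝ] P2 :=
  Finsupp.lsum ℝ fun p => LinearMap.toSpanSingleton ℝ _
    (Finsupp.lsum ℝ fun q => LinearMap.toSpanSingleton ℝ P2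
      (Finsupp.single (p.1 * q.1, p.2 * q.2) ((-1 : ℝ) ^ (bcount p.2 * bcount q.1))))

lemma tmul_eq_tmulₗ (f g : P2) : tmul f g = tmulₗ f g := by
  simp only [tmul, tmulₗ, Finsupp.lsum_apply, Finsupp.sum, LinearMap.sum_apply,
    LinearMap.toSpanSingleton_apply, LinearMap.smul_apply, Finset.smul_sum,
    Finsupp.smul_single, smul_eq_mul, mul_assoc]

section Bilinear

variable (c : ℝ) (f f' g g' : P2)

@[simp] lemma zero_tmul : tmul 0 g = 0 := by simp [tmul_eq_tmulₗ]
@[simp] lemma tmul_zero : tmul f 0 = 0 := by simp [tmul_eq_tmulₗ]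
lemma add_tmul : tmul (f + f') g = tmul f g + tmul f' g := by simp [tmul_eq_tmulₗ]
lemma tmul_add : tmul f (g + g') = tmul f g + tmul f g' := by simp [tmul_eq_tmulₗ]
lemma sub_tmul : tmul (f - f') g = tmul f g - tmul f' g := by simp [tmul_eq_tmulₗ]
lemma tmul_sub : tmul f (g - g') = tmul f g - tmul f g' := by simp [tmul_eq_tmulₗ]
lemma smul_tmul : tmul (c • f) g = c • tmul f g := by simp [tmul_eq_tmulₗ]
lemma tmul_smul : tmul f (c • g) = c • tmul f g := by simp [tmul_eq_tmulₗ]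

lemma tmul_sum {ι : Type*} (s : Finset ι) (h : ι → P2) :
    tmul f (∑ i ∈ s, h i) = ∑ i ∈ s, tmul f (h i) := by
  simp [tmul_eq_tmulₗ]

end Bilinear

lemma single_tmul_single (p q : Word × Word) (r s : ℝ) :
    tmul (Finsupp.single p r) (Finsupp.single q s)
      = Finsupp.single (p.1 * q.1, p.2 * q.2)
          (r * s * ((-1 : ℝ) ^ (bcount p.2 * bcount q.1))) := by
  simp [tmul]

@[simp] lemma bcount_one : bcount 1 = 0 := by simp [bcount]

lemma bcount_mul (u v : Word) : bcount (u * v) = bcount u + bcount v := by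
  simp [bcount, List.count_append]

lemma one_tmul (z : P2) : tmul (W2 1 1) z = z := by
  induction z using Finsupp.induction_linear with
  | zero => exact tmul_zero _
  | add f g hf hg => rw [tmul_add, hf, hg]
  | single q s => simp [W2, single_tmul_single]

lemma tmul_assoc (f g h : P2) : tmul (tmul f g) h = tmul f (tmul g h) := by
  induction f using Finsupp.induction_linear with
  | zero => simp
  | add f f' hf hf' => rw [add_tmul, add_tmul, hf, hf', add_tmul]
  | single p r =>
  induction g using Finsupp.induction_linear with
  | zero => simp
  | add g g' hg hg' => rw [tmul_add, add_tmul, hg, hg', add_tmul, tmul_add]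
  | single q s =>
  induction h using Finsupp.induction_linear with
  | zero => simp
  | add h h' hh hh' => rw [tmul_add, hh, hh', tmul_add, tmul_add]
  | single u t =>
    simp only [single_tmul_single, bcount_mul, mul_assoc, Nat.add_mul, Nat.mul_add, pow_add]
    congr 1
    ring

def IsKoszulDerivation (D : P2 →ₗ[ℝ] P2) : Prop :=
  ∀ p q : Word × Word,
    D (tmul (Finsupp.single p 1) (Finsupp.single q 1))
      = tmul (D (Finsupp.single p 1)) (Finsupp.single q 1)
        + ((-1 : ℝ) ^ (bcount p.1 + bcount p.2)) •
            tmul (Finsupp.single p 1) (D (Finsupp.single q 1))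

namespace IsKoszulDerivation

variable {D : P2 →ₗ[ℝ] P2}

lemma map_single_tmul (hD : IsKoszulDerivation D) (p : Word × Word) (z : P2) :
    D (tmul (Finsupp.single p 1) z)
      = tmul (D (Finsupp.single p 1)) z
        + ((-1 : ℝ) ^ (bcount p.1 + bcount p.2)) • tmul (Finsupp.single p 1) (D z) := by
  induction z using Finsupp.induction_linear with
  | zero => simp
  | add f g hf hg =>
    rw [tmul_add, map_add, hf, hg, map_add, tmul_add, tmul_add, smul_add]
    abel
  | single q s =>
    rw [← mul_one s, ← smul_eq_mul, ← Finsupp.smul_single, tmul_smul, map_smul, hD p q,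
      map_smul, tmul_smul, tmul_smul, smul_add, smul_comm s]

lemma map_tmul_of_mem_deg2m1 (hD : IsKoszulDerivation D) {x : P2} (hx : x ∈ Deg2m1)
    (z : P2) : D (tmul x z) = tmul (D x) z - tmul x (D z) := by
  induction hx using Submodule.span_induction generalizing z with
  | mem y hy =>
    obtain ⟨p, rfl, hp⟩ : ∃ p : Word × Word, y = Finsupp.single p 1 ∧
        bcount p.1 + bcount p.2 = 1 := by
      rcases hy with rfl | rfl | rfl | rfl <;>
        exact ⟨_, rfl, by simp [bcount, aW, bW, cW]⟩
    rw [hD.map_single_tmul, hp, pow_one, neg_one_smul, sub_eq_add_neg]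
  | zero => simp
  | add y y' _ _ hy hy' =>
    rw [add_tmul, map_add, hy, hy', map_add, add_tmul, add_tmul]
    abel
  | smul c y _ hy =>
    rw [smul_tmul, map_smul, hy, map_smul, smul_tmul, smul_tmul, smul_sub]

end IsKoszulDerivation

lemma map_tpow_eq_sum (D : P2 →ₗ[ℝ] P2) (hunit : D (W2 1 1) = 0) (x : P2)
    (hx : ∀ z, D (tmul x z) = tmul (D x) z - tmul x (D z)) (n : ℕ) :
    D (tpow x n)
      = ∑ j ∈ Finset.range n,
          ((-1 : ℝ) ^ j) • tmul (tpow x j) (tmul (D x) (tpow x (n - 1 - j))) := by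
  induction n with
  | zero => simpa [tpow] using hunit
  | succ n ih =>
    have shift : ∀ j ∈ Finset.range n,
        ((-1 : ℝ) ^ (j + 1)) •
            tmul (tpow x (j + 1)) (tmul (D x) (tpow x (n + 1 - 1 - (j + 1))))
          = -tmul x (((-1 : ℝ) ^ j) • tmul (tpow x j) (tmul (D x) (tpow x (n - 1 - j)))) := by
      intro j _
      rw [show n + 1 - 1 - (j + 1) = n - 1 - j by omega, tpow, tmul_assoc, tmul_smul,
        pow_succ, mul_neg_one, neg_smul]
    rw [tpow, hx, ih, Finset.sum_range_succ', Finset.sum_congr rfl shift, tmul_sum,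
      Finset.sum_neg_distrib, pow_zero, one_smul, tpow, one_tmul, Nat.add_sub_cancel,
      Nat.sub_zero, sub_eq_neg_add]

theorem stmt12_general
    -- ∂ on Ω⊠Ω: a derivation for ⋄ with the Koszul sign, with the standard value
    -- on the unit e⊠e:
    (D2 : P2 →ₗ[ℝ] P2)
    (hunit : D2 (W2 1 1) = 0)
    (hleib : ∀ p q : Word × Word,
      D2 (tmul (Finsupp.single p 1) (Finsupp.single q 1))
        = tmul (D2 (Finsupp.single p 1)) (Finsupp.single q 1)
          + ((-1 : ℝ) ^ (bcount p.1 + bcount p.2)) •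
              tmul (Finsupp.single p 1) (D2 (Finsupp.single q 1)))
    -- the element x of bidegree (2,−1) with ∂x = c⊠c − a⊠a:
    (x : P2) (hx : x ∈ Deg2m1) (hxd : D2 x = W2 cW cW - W2 aW aW) :
    ∀ k : ℕ, 2 ≤ k →
      D2 (tpow x (k - 1))
        = ∑ i ∈ Finset.Ico 1 k, ((-1 : ℝ) ^ (i + 1)) •
            (tmul (tpow x (i - 1)) (tmul (W2 cW cW) (tpow x (k - 1 - i)))
              - tmul (tpow x (i - 1)) (tmul (W2 aW aW) (tpow x (k - 1 - i)))) := by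
  intro k _
  have hD : IsKoszulDerivation D2 := hleib
  rw [map_tpow_eq_sum D2 hunit x (hD.map_tmul_of_mem_deg2m1 hx) (k - 1), hxd,
    Finset.sum_Ico_eq_sum_range]
  refine Finset.sum_congr rfl fun j _ => ?_
  rw [Nat.add_sub_cancel_left, show k - 1 - (1 + j) = k - 1 - 1 - j by omega,
    show 1 + j + 1 = j + 2 by ring, pow_add, neg_one_sq, mul_one, sub_tmul, tmul_sub]

theorem stmt12
    -- ∂ on Ω⊠Ω: a derivation for ⋄ with the Koszul sign, with the standard values
    -- on the generators a⊠e, c⊠e, b⊠e, e⊠a, e⊠c, e⊠b and on the unit e⊠e: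
    (D2 : P2 →ₗ[ℝ] P2)
    (hunit : D2 (W2 1 1) = 0)
    (haL : D2 (W2 aW 1) = 0) (hcL : D2 (W2 cW 1) = 0)
    (hbL : D2 (W2 bW 1) = W2 cW 1 - W2 aW 1)
    (haR : D2 (W2 1 aW) = 0) (hcR : D2 (W2 1 cW) = 0)
    (hbR : D2 (W2 1 bW) = W2 1 cW - W2 1 aW)
    (hleib : ∀ p q : Word × Word,
      D2 (tmul (Finsupp.single p 1) (Finsupp.single q 1))
        = tmul (D2 (Finsupp.single p 1)) (Finsupp.single q 1)
          + ((-1 : ℝ) ^ (bcount p.1 + bcount p.2)) •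
              tmul (Finsupp.single p 1) (D2 (Finsupp.single q 1)))
    -- the element x of bidegree (2,−1) with ∂x = c⊠c − a⊠a:
    (x : P2) (hx : x ∈ Deg2m1) (hxd : D2 x = W2 cW cW - W2 aW aW) :
    ∀ k : ℕ, 2 ≤ k →
      D2 (tpow x (k - 1))
        = ∑ i ∈ Finset.Ico 1 k, ((-1 : ℝ) ^ (i + 1)) •
            (tmul (tpow x (i - 1)) (tmul (W2 cW cW) (tpow x (k - 1 - i)))
              - tmul (tpow x (i - 1)) (tmul (W2 aW aW) (tpow x (k - 1 - i)))) :=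
  stmt12_general D2 hunit hleib x hx hxd
end
end
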